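/- arXiv:1910.13728 — 3 statements merged into one kernel-verified Lean document; each statement's English description precedes it below -/
import Mathlib

section
/- Suppose f : (ℝ^d)^K → (ℝ^m)^K is permutation equivariant. Then there exists a function h : ℝ^d × Multiset ℝ^d → ℝ^m such that f(x)_k = h(x_k, {x_n : n ≠ k}) for all x and k, where {x_n : n ≠ k} is the multiset of the other blocks. -/
/-- The multiset of values over `univ.erase k` equals the multiset of values of the
composition with `succAbove k`. -/
lemma erase_map_eq_succAbove {α : Type*} {n : ℕ} (k : Fin (n + 1)) (x : Fin (n + 1) → α) :
    (Finset.univ.erase k).val.map x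
      = Multiset.map (fun j => x (k.succAbove j)) (Finset.univ : Finset (Fin n)).val := by
  have h1 : (Finset.univ.erase k) =
      Finset.map ⟨k.succAbove, Fin.succAbove_right_injective⟩ Finset.univ := by
    rw [← Finset.compl_singleton, ← Fin.image_succAbove_univ,
      Finset.map_eq_image]
    rfl
  rw [h1, Finset.map_val, Multiset.map_map]
  rfl

lemma univ_val_cons {α : Type*} [Fintype α] [DecidableEq α] (k : α) :
    (Finset.univ : Finset α).val = k ::ₘ (Finset.univ.erase k).val := by
  rw [Finset.erase_val, Multiset.cons_erase (Finset.mem_univ_val k)]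

/-- Two tuples with the same multiset of values differ by a permutation. -/
lemma exists_perm_of_map_eq {α : Type*} : ∀ (n : ℕ) (x y : Fin n → α),
    Multiset.map x (Finset.univ : Finset (Fin n)).val
      = Multiset.map y (Finset.univ : Finset (Fin n)).val →
    ∃ σ : Equiv.Perm (Fin n), x = y ∘ σ := by
  intro n
  induction n with
  | zero => exact fun x y _ => ⟨1, funext fun i => i.elim0⟩
  | succ n ih =>
    intro x y h
    have hx0 : x 0 ∈ Multiset.map y (Finset.univ : Finset (Fin (n+1))).val := by
      rw [← h]
      exact Multiset.mem_map_of_mem x (Finset.mem_univ_val 0)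
    obtain ⟨j, -, hj⟩ := Multiset.mem_map.mp hx0
    have e1 : Multiset.map x (Finset.univ : Finset (Fin (n+1))).val
        = x 0 ::ₘ Multiset.map x (Finset.univ.erase 0).val := by
      rw [univ_val_cons (0 : Fin (n+1)), Multiset.map_cons]
    have e2 : Multiset.map y (Finset.univ : Finset (Fin (n+1))).val
        = y j ::ₘ Multiset.map y (Finset.univ.erase j).val := by
      rw [univ_val_cons j, Multiset.map_cons]
    rw [e1, e2, hj] at h
    have h2 := (Multiset.cons_inj_right _).mp h
    rw [erase_map_eq_succAbove, erase_map_eq_succAbove] at h2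
    obtain ⟨σ', hσ'⟩ := ih _ _ h2
    refine ⟨(finSuccEquiv' (0 : Fin (n+1))).trans
      ((σ'.optionCongr).trans (finSuccEquiv' j).symm), funext fun i => ?_⟩
    rcases eq_or_ne i 0 with rfl | hi
    · simp [hj]
    · obtain ⟨m, rfl⟩ := Fin.exists_succAbove_eq hi
      have := congrFun hσ' m
      simp only [Function.comp_apply, Equiv.trans_apply, finSuccEquiv'_succAbove]
      simpa using this

/-- Well-definedness core: equal own block and equal multiset of other blocks gives a
permutation sending `l` to `k` and transporting `x` to `y`. -/
lemma exists_perm_erase {α : Type*} {n : ℕ} (x y : Fin (n + 1) → α) (k l : Fin (n + 1))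
    (hval : x k = y l)
    (hms : (Finset.univ.erase k).val.map x = (Finset.univ.erase l).val.map y) :
    ∃ σ : Equiv.Perm (Fin (n + 1)), σ l = k ∧ y = x ∘ σ := by
  rw [erase_map_eq_succAbove, erase_map_eq_succAbove] at hms
  obtain ⟨σ', hσ'⟩ := exists_perm_of_map_eq n _ _ hms.symm
  refine ⟨(finSuccEquiv' l).trans ((σ'.optionCongr).trans (finSuccEquiv' k).symm), by simp,
    funext fun i => ?_⟩
  rcases eq_or_ne i l with rfl | hi
  · simpa using hval.symm
  · obtain ⟨m, rfl⟩ := Fin.exists_succAbove_eq hi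
    have := congrFun hσ' m
    simpa using this

theorem stmt_3 (K d m : ℕ)
    (f : (Fin K → Fin d → ℝ) → (Fin K → Fin m → ℝ))
    (hf : ∀ (σ : Equiv.Perm (Fin K)) (x : Fin K → Fin d → ℝ),
      f (fun i => x (σ i)) = fun i => f x (σ i)) :
    ∃ h : (Fin d → ℝ) × Multiset (Fin d → ℝ) → (Fin m → ℝ),
      ∀ (x : Fin K → Fin d → ℝ) (k : Fin K),
        f x k = h (x k, (Finset.univ.erase k).val.map x) := by
  classical
  refine ⟨fun p =>
    if H : ∃ xk : (Fin K → Fin d → ℝ) × Fin K,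
        xk.1 xk.2 = p.1 ∧ (Finset.univ.erase xk.2).val.map xk.1 = p.2
      then f H.choose.1 H.choose.2 else 0, fun x k => ?_⟩
  have H : ∃ xk : (Fin K → Fin d → ℝ) × Fin K,
      xk.1 xk.2 = x k ∧ (Finset.univ.erase xk.2).val.map xk.1
        = (Finset.univ.erase k).val.map x := ⟨(x, k), rfl, rfl⟩
  simp only [dif_pos H]
  obtain ⟨h1, h2⟩ := H.choose_spec
  set y := H.choose.1
  set l := H.choose.2
  -- K = n + 1 since Fin K is inhabited
  obtain ⟨n, rfl⟩ : ∃ n, K = n + 1 := ⟨K - 1, (Nat.succ_pred_eq_of_pos k.pos).symm⟩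
  obtain ⟨σ, hσl, hyx⟩ := exists_perm_erase x y k l h1.symm h2.symm
  have := congrFun (hf σ x) l
  rw [hσl] at this
  rw [← this, hyx]
  rfl
end

section
/- A linear map W : (ℝ^d)^K → (ℝ^m)^K (K ≥ 2) is permutation equivariant if and only if there exist matrices U, V ∈ ℝ^{m×d} such that the (i,j)-block of W equals U when i = j and V when i ≠ j. -/
theorem stmt_11 (K d m : ℕ) (hK : 2 ≤ K)
    (W : Matrix (Fin K × Fin m) (Fin K × Fin d) ℝ)
    (f : (Fin K → Fin d → ℝ) → (Fin K → Fin m → ℝ))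
    (hf : ∀ (x : Fin K → Fin d → ℝ) (k : Fin K) (i : Fin m),
      f x k i = W.mulVec (fun jb => x jb.1 jb.2) (k, i)) :
    (∀ (σ : Equiv.Perm (Fin K)) (x : Fin K → Fin d → ℝ),
      f (fun i => x (σ i)) = fun i => f x (σ i)) ↔
    (∃ U V : Matrix (Fin m) (Fin d) ℝ, ∀ (i j : Fin K) (a : Fin m) (b : Fin d),
      W (i, a) (j, b) = if i = j then U a b else V a b) := by
  have hmv : ∀ (x : Fin K → Fin d → ℝ) (k : Fin K) (a : Fin m),
      f x k a = ∑ p : Fin K × Fin d, W (k, a) p * x p.1 p.2 := by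
    intro x k a
    rw [hf]
    simp [Matrix.mulVec, dotProduct]
  constructor
  · intro heq
    have key : ∀ (σ : Equiv.Perm (Fin K)) (k j : Fin K) (a : Fin m) (b : Fin d),
        W (σ k, a) (σ j, b) = W (k, a) (j, b) := by
      intro σ k j a b
      have h := congrFun (congrFun
        (heq σ (fun j' b' => if (j', b') = ((σ j : Fin K), b) then (1:ℝ) else 0)) k) a
      rw [hmv, hmv] at h
      have hL : (∑ p : Fin K × Fin d, W (k, a) p *
          (if ((σ p.1 : Fin K), p.2) = ((σ j : Fin K), b) then (1:ℝ) else 0)) = W (k, a) (j, b) := by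
        rw [Finset.sum_eq_single (j, b)]
        · simp
        · intro p _ hp
          have : ((σ p.1 : Fin K), p.2) ≠ ((σ j : Fin K), b) := by
            intro hc
            apply hp
            obtain ⟨h1, h2⟩ := Prod.mk.injEq .. ▸ hc
            exact Prod.ext (σ.injective h1) h2
          simp [this]
        · simp
      have hR : (∑ p : Fin K × Fin d, W ((σ k : Fin K), a) p *
          (if (p.1, p.2) = ((σ j : Fin K), b) then (1:ℝ) else 0)) = W ((σ k : Fin K), a) (σ j, b) := by
        rw [Finset.sum_eq_single ((σ j : Fin K), b)]
        · simp
        · intro p _ hp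
          simp [hp]
        · simp
      rw [hL] at h
      rw [← hR]
      exact h.symm
    have h0 : 0 < K := by omega
    have h1 : 1 < K := by omega
    set z0 : Fin K := ⟨0, h0⟩ with hz0
    set z1 : Fin K := ⟨1, h1⟩ with hz1
    have hz01 : z0 ≠ z1 := by
      simp [hz0, hz1, Fin.ext_iff]
    refine ⟨fun a b => W (z0, a) (z0, b), fun a b => W (z0, a) (z1, b), ?_⟩
    intro i j a b
    by_cases hij : i = j
    · subst hij
      simp only [if_pos rfl]
      have := key (Equiv.swap z0 i) z0 z0 a b
      rwa [Equiv.swap_apply_left] at this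
    · simp only [if_neg hij]
      set τ := Equiv.swap z0 i with hτ
      set j' := τ.symm j with hj'
      have hτj' : τ j' = j := τ.apply_symm_apply j
      have hj'0 : j' ≠ z0 := by
        intro hc
        apply hij
        rw [← hτj', hc, hτ, Equiv.swap_apply_left]
      set σ := (Equiv.swap z1 j').trans τ with hσ
      have hσ0 : σ z0 = i := by
        rw [hσ]
        simp only [Equiv.trans_apply]
        rw [Equiv.swap_apply_of_ne_of_ne hz01 (Ne.symm hj'0), hτ, Equiv.swap_apply_left]
      have hσ1 : σ z1 = j := by
        rw [hσ]
        simp only [Equiv.trans_apply]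
        rw [Equiv.swap_apply_left, hτj']
      have := key σ z0 z1 a b
      rwa [hσ0, hσ1] at this
  · rintro ⟨U, V, hW⟩ σ x
    funext k a
    rw [hmv, hmv]
    apply Fintype.sum_equiv (Equiv.prodCongr σ (Equiv.refl (Fin d)))
    intro p
    simp only [Equiv.prodCongr_apply, Equiv.coe_refl, Prod.map, id]
    rw [hW, hW]
    have : σ k = σ p.1 ↔ k = p.1 := σ.injective.eq_iff
    by_cases hk : k = p.1 <;> simp [hk, this]
end

section
/- The set of permutation equivariant linear maps from (ℝ^d)^K to (ℝ^m)^K forms a linear subspace of all linear maps, and for K ≥ 2 the maps x ↦ (U x_k + V ∑_{n≠k} x_n)_k with U = 0 or V = 0 span a subspace of dimension 2md (i.e., the parameters (U,V) ↦ corresponding equivariant map is injective and linear). -/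
/-- The parameter-shared equivariant linear map determined by `(U, V)`. -/
def Phi (K d m : ℕ) (U V : Matrix (Fin m) (Fin d) ℝ)
    (x : Fin K → Fin d → ℝ) : Fin K → Fin m → ℝ :=
  fun k => U.mulVec (x k) + V.mulVec (∑ n ∈ Finset.univ.erase k, x n)

/-- Permutation equivariance of a map between `K`-block vectors. -/
def PermEquivariant (K d m : ℕ)
    (f : (Fin K → Fin d → ℝ) → (Fin K → Fin m → ℝ)) : Prop :=
  ∀ (σ : Equiv.Perm (Fin K)) (x : Fin K → Fin d → ℝ),
    f (fun i => x (σ i)) = fun i => f x (σ i)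


lemma erase_sum {d K : ℕ} (x : Fin K → Fin d → ℝ) (k : Fin K) :
    (∑ n ∈ Finset.univ.erase k, x n) = (∑ n, x n) - x k := by
  rw [Finset.sum_erase_eq_sub (Finset.mem_univ k)]

theorem stmt_15 (K d m : ℕ) (hK : 2 ≤ K) :
    -- the permutation equivariant linear maps form a linear subspace
    (∀ f g : (Fin K → Fin d → ℝ) →ₗ[ℝ] (Fin K → Fin m → ℝ),
      PermEquivariant K d m f → PermEquivariant K d m g →
        PermEquivariant K d m (f + g) ∧ ∀ c : ℝ, PermEquivariant K d m (c • f)) ∧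
    -- Φ is linear in (U, V)
    (∀ (U U' V V' : Matrix (Fin m) (Fin d) ℝ) (x : Fin K → Fin d → ℝ),
      Phi K d m (U + U') (V + V') x = Phi K d m U V x + Phi K d m U' V' x) ∧
    (∀ (c : ℝ) (U V : Matrix (Fin m) (Fin d) ℝ) (x : Fin K → Fin d → ℝ),
      Phi K d m (c • U) (c • V) x = c • Phi K d m U V x) ∧
    -- Φ is injective
    (Function.Injective
      (fun p : Matrix (Fin m) (Fin d) ℝ × Matrix (Fin m) (Fin d) ℝ =>
        Phi K d m p.1 p.2)) ∧
    -- every Φ(U,V) is permutation equivariant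
    (∀ U V : Matrix (Fin m) (Fin d) ℝ, PermEquivariant K d m (Phi K d m U V)) := by
  refine ⟨?_, ?_, ?_, ?_, ?_⟩
  · intro f g hf hg
    constructor
    · intro σ x
      have hf' := hf σ x; have hg' := hg σ x
      funext i
      simp only [LinearMap.add_apply, Pi.add_apply]
      rw [hf', hg']
    · intro c σ x
      have hf' := hf σ x
      funext i
      simp only [LinearMap.smul_apply, Pi.smul_apply]
      rw [hf']
  · intro U U' V V' x
    funext k
    simp only [Phi, Matrix.add_mulVec, Pi.add_apply]
    abel
  · intro c U V x
    funext k
    simp only [Phi, Matrix.smul_mulVec, Pi.add_apply, Pi.smul_apply, smul_add]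
  · rintro ⟨U, V⟩ ⟨U', V'⟩ h
    simp only [Prod.mk.injEq]
    have hK0 : 0 < K := by omega
    have hK1 : 1 < K := by omega
    set k0 : Fin K := ⟨0, hK0⟩ with hk0
    set k1 : Fin K := ⟨1, hK1⟩ with hk1
    have h0 : k0 ≠ k1 := by simp [hk0, hk1, Fin.ext_iff]
    have key : ∀ (v : Fin d → ℝ), U.mulVec v = U'.mulVec v ∧ V.mulVec v = V'.mulVec v := by
      intro v
      set x : Fin K → Fin d → ℝ := fun n => if n = k0 then v else 0 with hx
      have hx0 : x k0 = v := by simp [hx]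
      have hsum0 : (∑ n ∈ Finset.univ.erase k0, x n) = 0 := by
        apply Finset.sum_eq_zero
        intro n hn
        simp [hx, Finset.mem_erase.mp hn |>.1]
      have hsum1 : (∑ n ∈ Finset.univ.erase k1, x n) = v := by
        rw [Finset.sum_eq_single k0]
        · simp [hx]
        · intro n _ hn; simp [hx, hn]
        · intro hn; exact absurd (Finset.mem_erase.mpr ⟨h0, Finset.mem_univ _⟩) hn
      have hx1 : x k1 = 0 := by simp [hx, h0.symm]
      have h0' := congrFun h x
      have e0 := congrFun h0' k0
      have e1 := congrFun h0' k1
      simp only [Phi, hx0, hx1, hsum0, hsum1, Matrix.mulVec_zero, add_zero, zero_add] at e0 e1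
      exact ⟨e0, e1⟩
    constructor
    · ext i j
      have := congrFun (key (Pi.single j 1)).1 i
      simpa [Matrix.mulVec_single] using this
    · ext i j
      have := congrFun (key (Pi.single j 1)).2 i
      simpa [Matrix.mulVec_single] using this
  · intro U V σ x
    funext i
    simp only [Phi]
    congr 1
    rw [erase_sum, erase_sum]
    rw [Equiv.sum_comp σ x]
end
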